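/- For the Grover algorithm matrix U_N, the reciprocal of the matrix zeta function satisfies ζ_{U_N}(u)^{-1} = det(I_N - u·U_N) = (1 + u)^{N-2}(1 - 2(1 - 2/N)u + u²). -/

import Mathlib

/-- The Grover diffusion matrix `R_D = 2|D⟩⟨D| - I_N`. -/
noncomputable def groverRD (N : ℕ) : Matrix (Fin N) (Fin N) ℝ :=
  Matrix.of fun i j => 2 / (N : ℝ) - if i = j then 1 else 0

/-- The Grover oracle matrix `R_f = I_N - 2|0⟩⟨0|`. -/
def groverRf (N : ℕ) [NeZero N] : Matrix (Fin N) (Fin N) ℝ :=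
  Matrix.diagonal fun i => if i = 0 then -1 else 1

/-- The Grover algorithm matrix `U = R_D R_f`. -/
noncomputable def groverU (N : ℕ) [NeZero N] : Matrix (Fin N) (Fin N) ℝ :=
  groverRD N * groverRf N

/-! `1 - u • U_N` is `diag(1 - u, 1 + u, …, 1 + u)` plus a rank-one matrix, so away from `u = ±1`
its determinant is given by the matrix determinant lemma. Both sides of the identity are continuous
in `u`, hence they agree everywhere. -/

open Matrix

theorem Matrix.det_diagonal_add_replicateCol_mul_replicateRow {K : Type*} [Field K]
    {n : Type*} [Fintype n] [DecidableEq n] {ι : Type*} [Unique ι] {d : n → K}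
    (hd : ∀ i, d i ≠ 0) (a b : n → K) :
    (diagonal d + replicateCol ι a * replicateRow ι b).det =
      (∏ i, d i) * (1 + ∑ i, b i * a i / d i) := by
  have hunit : IsUnit (diagonal d).det := by
    rw [det_diagonal]
    exact (Finset.prod_ne_zero_iff.2 fun i _ => hd i).isUnit
  have hinv : (diagonal d)⁻¹ = diagonal fun i => (d i)⁻¹ :=
    inv_eq_right_inv <| by simp [diagonal_mul_diagonal, hd]
  rw [det_add_replicateCol_mul_replicateRow hunit, det_diagonal, det_unique, hinv]
  simp [Matrix.mul_apply, diagonal_apply, div_eq_mul_inv, mul_right_comm]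

def groverSign (N : ℕ) [NeZero N] (i : Fin N) : ℝ := if i = 0 then -1 else 1

theorem one_sub_smul_groverU (N : ℕ) [NeZero N] (u : ℝ) :
    1 - u • groverU N =
      diagonal (fun i => 1 + u * groverSign N i) +
        replicateCol Unit (fun _ => -(2 * u / N)) * replicateRow Unit (groverSign N) := by
  ext i j
  simp only [groverU, groverRD, groverRf, groverSign, mul_diagonal, Matrix.sub_apply, one_apply,
    Matrix.smul_apply, Matrix.add_apply, diagonal_apply, of_apply, smul_eq_mul]
  simp only [mul_apply, replicateCol_apply, replicateRow_apply, Finset.univ_unique,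
    Finset.sum_singleton, groverSign]
  split_ifs <;> simp_all <;> ring

theorem det_one_sub_smul_groverU_of_ne (N : ℕ) [NeZero N] (hN : 2 ≤ N) {u : ℝ}
    (hu₁ : u ≠ 1) (hu₂ : u ≠ -1) :
    (1 - u • groverU N).det =
      (1 + u) ^ (N - 2) * (1 - 2 * (1 - 2 / (N : ℝ)) * u + u ^ 2) := by
  have h₁ : 1 - u ≠ 0 := sub_ne_zero.2 hu₁.symm
  have h₂ : 1 + u ≠ 0 := fun h => hu₂ (by linarith)
  have hd : ∀ i, 1 + u * groverSign N i ≠ 0 := fun i => by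
    unfold groverSign; split_ifs <;> simpa [← sub_eq_add_neg]
  rw [one_sub_smul_groverU, det_diagonal_add_replicateCol_mul_replicateRow hd]
  obtain ⟨n, rfl⟩ : ∃ n, N = n + 2 := ⟨N - 2, by omega⟩
  simp only [Fin.prod_univ_succ, Fin.sum_univ_succ, groverSign, Fin.succ_ne_zero, if_true,
    if_false, mul_neg_one, mul_one, ← sub_eq_add_neg, Finset.prod_const, Finset.sum_const,
    Finset.card_univ, Fintype.card_fin]
  rw [Nat.add_sub_cancel, nsmul_eq_mul]
  push_cast
  field_simp
  ring

/-- `ζ_{U_N}(u)⁻¹ = det(I_N - u U_N) = (1 + u)^{N-2} (1 - 2(1 - 2/N)u + u²)`. -/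
theorem stmt_15 (N : ℕ) [NeZero N] (hN : 2 ≤ N) (u : ℝ) :
    Matrix.det (1 - u • groverU N) =
      (1 + u) ^ (N - 2) * (1 - 2 * (1 - 2 / (N : ℝ)) * u + u ^ 2) := by
  have hdense : Dense ({1, -1} : Set ℝ)ᶜ := (Set.toFinite _).countable.dense_compl ℝ
  have hdet : Continuous fun v : ℝ => (1 - v • groverU N).det := by fun_prop
  have hrhs : Continuous fun v : ℝ =>
      (1 + v) ^ (N - 2) * (1 - 2 * (1 - 2 / (N : ℝ)) * v + v ^ 2) := by fun_prop
  refine congrFun (hdet.ext_on hdense hrhs fun v hv => ?_) u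
  simp only [Set.mem_compl_iff, Set.mem_insert_iff, Set.mem_singleton_iff, not_or] at hv
  exact det_one_sub_smul_groverU_of_ne N hN hv.1 hv.2
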